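/- The f-function is multiplicative under the Zykov join: for finite simple graphs G and H, f_{G+H}(t) = f_G(t) · f_H(t), where f_G(t) = 1 + f_0 t + f_1 t² + ⋯ and f_k is the number of (k+1)-cliques of G. -/

import Mathlib

open SimpleGraph

/-- The Zykov join of two graphs: disjoint union plus all cross edges. -/
def zykovJoin {α β : Type} (G : SimpleGraph α) (H : SimpleGraph β) :
    SimpleGraph (α ⊕ β) where
  Adj x y := (G.sum H).Adj x y ∨ x.isLeft ≠ y.isLeft
  symm := ⟨by
    intro x y h
    rcases h with h | h
    · exact Or.inl ((G.sum H).adj_symm h)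
    · exact Or.inr (Ne.symm h)⟩
  loopless := ⟨by
    intro x h
    rcases h with h | h
    · exact (G.sum H).irrefl h
    · exact h rfl⟩

/-- `fVec G k` is the number of `(k+1)`-cliques of `G`. -/
noncomputable def fVec {α : Type} (G : SimpleGraph α) (k : ℕ) : ℕ :=
  Nat.card {s : Finset α // G.IsNClique (k + 1) s}

open Polynomial in
/-- The f-function `f_G(t) = 1 + f₀ t + f₁ t² + ⋯` of `G`. -/
noncomputable def fPoly {α : Type} (G : SimpleGraph α) : Polynomial ℤ :=
  1 + ∑ k ∈ Finset.range (Nat.card α), (fVec G k : Polynomial ℤ) * X ^ (k + 1)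

/-! Counting the empty clique as well, `f_G(t) = ∑ t ^ #s` over all cliques `s` of `G`. A clique of
`G + H` is exactly a disjoint union of a clique of `G` and a clique of `H`, and the sizes add, so
the sum for `G + H` factors as the product of the sums for `G` and `H`. -/

namespace SimpleGraph

open Finset Polynomial

variable {α β : Type}

theorem isClique_zykovJoin_iff (G : SimpleGraph α) (H : SimpleGraph β) (s : Finset (α ⊕ β)) :
    (zykovJoin G H).IsClique (s : Set (α ⊕ β)) ↔
      G.IsClique (s.toLeft : Set α) ∧ H.IsClique (s.toRight : Set β) := by
  simp [isClique_iff, Set.Pairwise, zykovJoin]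

section Fintype

variable [Fintype α] [DecidableEq α] (G : SimpleGraph α) [DecidableRel G.Adj]

theorem fVec_eq_card_cliqueFinset (k : ℕ) : fVec G k = #(G.cliqueFinset (k + 1)) := by
  rw [fVec, Nat.card_eq_fintype_card, Fintype.card_subtype, cliqueFinset]

theorem card_cliqueFinset_zero : #(G.cliqueFinset 0) = 1 :=
  card_eq_one.2 ⟨∅, by ext; simp [isNClique_zero]⟩

theorem sum_filter_card_eq_cliques {M : Type*} [AddCommMonoid M] (f : ℕ → M) (n : ℕ) :
    ∑ s ∈ univ.filter (fun s : Finset α => G.IsClique (s : Set α)) with #s = n, f #s =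
      #(G.cliqueFinset n) • f n := by
  rw [filter_filter, ← sum_const]
  exact sum_congr (by ext; simp [isNClique_iff]) fun s hs => by rw [(mem_filter.1 hs).2.2]

theorem fPoly_eq_sum_cliques :
    fPoly G = ∑ s ∈ univ.filter (fun s : Finset α => G.IsClique (s : Set α)), (X : ℤ[X]) ^ #s := by
  have hcard : ∀ s ∈ univ.filter (fun s : Finset α => G.IsClique (s : Set α)),
      #s ∈ range (Fintype.card α + 1) := fun s _ =>
    mem_range_succ_iff.2 (card_le_univ s)
  rw [← sum_fiberwise_of_maps_to hcard, sum_range_succ', fPoly, add_comm, Nat.card_eq_fintype_card]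
  simp only [sum_filter_card_eq_cliques G (fun n => (X : ℤ[X]) ^ n), fVec_eq_card_cliqueFinset,
    card_cliqueFinset_zero, nsmul_eq_mul, Nat.cast_one, one_mul, pow_zero]

end Fintype

end SimpleGraph

/-- The f-function is multiplicative under the Zykov join:
`f_{G+H}(t) = f_G(t) * f_H(t)`. -/
theorem fPoly_zykovJoin {α β : Type} [Fintype α] [Fintype β]
    (G : SimpleGraph α) (H : SimpleGraph β) :
    fPoly (zykovJoin G H) = fPoly G * fPoly H := by
  classical
  simp only [fPoly_eq_sum_cliques, Finset.sum_mul_sum, ← pow_add, ← Finset.sum_product']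
  refine Finset.sum_equiv Finset.sumEquiv.toEquiv (fun s => ?_) (fun s _ => ?_)
  · simp [isClique_zykovJoin_iff]
  · simp [Finset.card_toLeft_add_card_toRight]
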